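/- Pointwise two-variable zonal decomposition: let x = (x₁, x₂) ∈ ℍ² with Im(x₁) ≠ 0 and Im(x₂) ≠ 0, and let f be an ℍ-valued function defined on the four points obtained from x by conjugating any subset of the coordinates. Define, via iterated pointwise spherical derivatives, g_∅ = ((f)'_{s,x₁})'_{s,x₂}, g₁ = ((x₁f)'_{s,x₁})'_{s,x₂}, g₂ = (x₂·(f)'_{s,x₁})'_{s,x₂}, g₁₂ = (x₂·(x₁f)'_{s,x₁})'_{s,x₂}, where for a function h of x₂, h'_{s,x₂}(x) = (Im x₂)⁻¹(h(x₁,x₂) - h(x₁, conj x₂))/2, and similarly in x₁. Then f(x) = g₁₂(x) - conj(x₂)·g₁(x) - conj(x₁)·g₂(x) + conj(x₁)·conj(x₂)·g_∅(x), provided (f)'_{s,x₁} and (x₁f)'_{s,x₁} computed at (x₁, conj x₂) use the same formulas. -/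

import Mathlib

open Quaternion

/-- Pointwise spherical derivative of `f` with respect to the first variable. -/
noncomputable def sd1 (f : Quaternion ℝ → Quaternion ℝ → Quaternion ℝ)
    (x₁ x₂ : Quaternion ℝ) : Quaternion ℝ :=
  (x₁.im)⁻¹ * ((f x₁ x₂ - f (star x₁) x₂) / 2)

/-- Pointwise spherical derivative of `x₁ f` with respect to the first variable. -/
noncomputable def sd1x (f : Quaternion ℝ → Quaternion ℝ → Quaternion ℝ)
    (x₁ x₂ : Quaternion ℝ) : Quaternion ℝ :=
  (x₁.im)⁻¹ * ((x₁ * f x₁ x₂ - star x₁ * f (star x₁) x₂) / 2)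

lemma sub_star_q (x : Quaternion ℝ) : x - star x = 2 * x.im := by
  rw [two_mul]
  ext <;> simp [QuaternionAlgebra.im]

lemma star_comm_inv_im (x : Quaternion ℝ) :
    star x * (x.im)⁻¹ = (x.im)⁻¹ * star x := by
  have h1 : star x = (x.re : Quaternion ℝ) - x.im := by
    ext <;> simp [QuaternionAlgebra.im]
  have h2 : Commute x.im (x.im)⁻¹ := (Commute.refl _).inv_right₀
  rw [h1, sub_mul, mul_sub, h2.eq]
  congr 1
  exact (Quaternion.coe_commute x.re _).eq

lemma htwo : (2 : Quaternion ℝ) ≠ 0 := by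
  rw [← one_add_one_eq_two]
  intro e
  have := congrArg QuaternionAlgebra.re e
  simp at this

lemma key (x : Quaternion ℝ) (h : x.im ≠ 0) (a b : Quaternion ℝ) :
    (x.im)⁻¹ * ((x * a - star x * b) / 2) - star x * ((x.im)⁻¹ * ((a - b) / 2)) = a := by
  rw [← mul_assoc, star_comm_inv_im, mul_assoc, ← mul_sub]
  have hA : star x * ((a - b) / 2) = (star x * (a - b)) / 2 := (mul_div_assoc _ _ _).symm
  have hB : x * a - star x * b - star x * (a - b) = 2 * (x.im * a) := by
    rw [← mul_assoc, ← sub_star_q, mul_sub, sub_mul]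
    abel
  have h3 : (x * a - star x * b) / 2 - star x * ((a - b) / 2) = x.im * a := by
    rw [hA, ← sub_div, hB, two_mul, ← mul_two, mul_div_cancel_right₀ _ htwo]
  rw [h3, ← mul_assoc, inv_mul_cancel₀ h, one_mul]

/-- Pointwise two-variable zonal (Almansi-type) decomposition:
`f = g₁₂ − conj(x₂)g₁ − conj(x₁)g₂ + conj(x₁)conj(x₂)g_∅`, where the `g`'s are
iterated pointwise spherical derivatives. -/
theorem two_variable_zonal_decomposition
    (x₁ x₂ : Quaternion ℝ) (h₁ : x₁.im ≠ 0) (h₂ : x₂.im ≠ 0)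
    (f : Quaternion ℝ → Quaternion ℝ → Quaternion ℝ) :
    f x₁ x₂ =
      ((x₂.im)⁻¹ * ((x₂ * sd1x f x₁ x₂ - star x₂ * sd1x f x₁ (star x₂)) / 2)) -
      star x₂ * ((x₂.im)⁻¹ * ((sd1x f x₁ x₂ - sd1x f x₁ (star x₂)) / 2)) -
      star x₁ * ((x₂.im)⁻¹ * ((x₂ * sd1 f x₁ x₂ - star x₂ * sd1 f x₁ (star x₂)) / 2)) +
      star x₁ * star x₂ * ((x₂.im)⁻¹ * ((sd1 f x₁ x₂ - sd1 f x₁ (star x₂)) / 2)) := by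
  have e1 := key x₂ h₂ (sd1x f x₁ x₂) (sd1x f x₁ (star x₂))
  have e2 := key x₂ h₂ (sd1 f x₁ x₂) (sd1 f x₁ (star x₂))
  have e3 := key x₁ h₁ (f x₁ x₂) (f (star x₁) x₂)
  calc f x₁ x₂ = sd1x f x₁ x₂ - star x₁ * sd1 f x₁ x₂ := by
        rw [sd1x, sd1]; exact e3.symm
    _ = _ := by
        rw [mul_assoc (star x₁) (star x₂), sub_add, ← mul_sub, e1, e2]
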